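/- A perfect cuboid exists if and only if there exist positive integers a, b, c, u satisfying a < c, b < c, u < c and (a + c)·(b + c) > 2·c², such that u⁴a⁴b⁴ + 6a⁴u²b⁴c² − 2u⁴a⁴b²c² − 2u⁴a²b⁴c² + 4u²b⁴a²c⁴ + 4a⁴u²b²c⁴ − 12u⁴a²b²c⁴ + u⁴a⁴c⁴ + u⁴b⁴c⁴ + a⁴b⁴c⁴ + 6a⁴u²c⁶ + 6u²b⁴c⁶ − 8a²b²u²c⁶ − 2u⁴a²c⁶ − 2u⁴b²c⁶ − 2a⁴b²c⁶ − 2b⁴a²c⁶ + u⁴c⁸ + b⁴c⁸ + a⁴c⁸ + 4a²u²c⁸ + 4b²u²c⁸ − 12a²b²c⁸ + 6u²c¹⁰ − 2a²c¹⁰ − 2b²c¹⁰ + c¹² = 0. -/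

import Mathlib

/-!
Write `A± = c² ± a²`, `B± = c² ± b²`, `U± = c² ± u²`. The polynomial equals
`(A₋B₊U₊)² + (A₊B₋U₊)² - (A₊B₊U₋)²`, and `a/c ↦ ((c² - a²) : 2ac : (c² + a²))` is the half-angle
parametrization of right triangles. A perfect cuboid consists of three right triangles
`(x₃, d₃, L)`, `(x₁, d₁, L)`, `(d₂, x₂, L)` with common hypotenuse, linked by `x₃² + x₁² = d₂²`;
taking the half-angle parameters `a/c = d₃/(x₃ + L)`, `b/c = d₁/(x₁ + L)`, `u/c = x₂/(d₂ + L)`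
turns that link into the vanishing of the polynomial, and conversely.

The inequality is forced by the equation: as a polynomial in `u` the cuboid polynomial is
`F · (u⁴ + c⁴) + Q · u²` with `Q > 0`, and three of the four factors of `F` are positive.
-/

/-- A perfect cuboid: positive integer edges whose three face diagonals
and space diagonal are (positive) integers. -/
def PerfectCuboid : Prop :=
  ∃ x₁ x₂ x₃ d₁ d₂ d₃ L : ℤ,
    0 < x₁ ∧ 0 < x₂ ∧ 0 < x₃ ∧ 0 < d₁ ∧ 0 < d₂ ∧ 0 < d₃ ∧ 0 < L ∧
    x₂ ^ 2 + x₃ ^ 2 = d₁ ^ 2 ∧ x₃ ^ 2 + x₁ ^ 2 = d₂ ^ 2 ∧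
    x₁ ^ 2 + x₂ ^ 2 = d₃ ^ 2 ∧ x₁ ^ 2 + x₂ ^ 2 + x₃ ^ 2 = L ^ 2

section

variable {R : Type*} [CommRing R]

def cuboidPoly (a b c u : R) : R :=
  u ^ 4 * a ^ 4 * b ^ 4 + 6 * a ^ 4 * u ^ 2 * b ^ 4 * c ^ 2
    - 2 * u ^ 4 * a ^ 4 * b ^ 2 * c ^ 2 - 2 * u ^ 4 * a ^ 2 * b ^ 4 * c ^ 2
    + 4 * u ^ 2 * b ^ 4 * a ^ 2 * c ^ 4 + 4 * a ^ 4 * u ^ 2 * b ^ 2 * c ^ 4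
    - 12 * u ^ 4 * a ^ 2 * b ^ 2 * c ^ 4
    + u ^ 4 * a ^ 4 * c ^ 4 + u ^ 4 * b ^ 4 * c ^ 4 + a ^ 4 * b ^ 4 * c ^ 4
    + 6 * a ^ 4 * u ^ 2 * c ^ 6 + 6 * u ^ 2 * b ^ 4 * c ^ 6
    - 8 * a ^ 2 * b ^ 2 * u ^ 2 * c ^ 6
    - 2 * u ^ 4 * a ^ 2 * c ^ 6 - 2 * u ^ 4 * b ^ 2 * c ^ 6
    - 2 * a ^ 4 * b ^ 2 * c ^ 6 - 2 * b ^ 4 * a ^ 2 * c ^ 6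
    + u ^ 4 * c ^ 8 + b ^ 4 * c ^ 8 + a ^ 4 * c ^ 8
    + 4 * a ^ 2 * u ^ 2 * c ^ 8 + 4 * b ^ 2 * u ^ 2 * c ^ 8
    - 12 * a ^ 2 * b ^ 2 * c ^ 8
    + 6 * u ^ 2 * c ^ 10 - 2 * a ^ 2 * c ^ 10 - 2 * b ^ 2 * c ^ 10
    + c ^ 12

theorem cuboidPoly_eq_sq_add_sq_sub_sq (a b c u : R) :
    cuboidPoly a b c u =
      ((c ^ 2 - a ^ 2) * (c ^ 2 + b ^ 2) * (c ^ 2 + u ^ 2)) ^ 2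
        + ((c ^ 2 + a ^ 2) * (c ^ 2 - b ^ 2) * (c ^ 2 + u ^ 2)) ^ 2
        - ((c ^ 2 + a ^ 2) * (c ^ 2 + b ^ 2) * (c ^ 2 - u ^ 2)) ^ 2 := by
  unfold cuboidPoly
  ring

theorem cuboidPoly_eq_quadratic_in_sq (a b c u : R) :
    cuboidPoly a b c u =
      ((c ^ 2 - a * b) ^ 2 - ((a + b) * c) ^ 2) * ((c ^ 2 + a * b) ^ 2 - ((a - b) * c) ^ 2)
          * (u ^ 4 + c ^ 4)
        + 2 * c ^ 2 * (3 * c ^ 8 + 2 * (a ^ 2 + b ^ 2) * c ^ 6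
            + (3 * (a ^ 2 - b ^ 2) ^ 2 + 2 * a ^ 2 * b ^ 2) * c ^ 4
            + 2 * a ^ 2 * b ^ 2 * (a ^ 2 + b ^ 2) * c ^ 2 + 3 * a ^ 4 * b ^ 4) * u ^ 2 := by
  unfold cuboidPoly
  ring

theorem half_angle_relation {x d L c k : R} (h : x ^ 2 + d ^ 2 = L ^ 2) (hc : c = (x + L) * k) :
    L * (c ^ 2 - (d * k) ^ 2) = x * (c ^ 2 + (d * k) ^ 2) := by
  subst hc
  linear_combination (-(k ^ 2 * (x + L))) * h

theorem cuboidPoly_eq_zero_of_half_angle [IsDomain R] {a b c u x y z L : R} (hL : L ≠ 0)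
    (ha : L * (c ^ 2 - a ^ 2) = x * (c ^ 2 + a ^ 2))
    (hb : L * (c ^ 2 - b ^ 2) = y * (c ^ 2 + b ^ 2))
    (hu : L * (c ^ 2 - u ^ 2) = z * (c ^ 2 + u ^ 2)) (h : x ^ 2 + y ^ 2 = z ^ 2) :
    cuboidPoly a b c u = 0 := by
  set N := (c ^ 2 + a ^ 2) * (c ^ 2 + b ^ 2) * (c ^ 2 + u ^ 2)
  have hX : L * ((c ^ 2 - a ^ 2) * (c ^ 2 + b ^ 2) * (c ^ 2 + u ^ 2)) = x * N := by
    linear_combination (c ^ 2 + b ^ 2) * (c ^ 2 + u ^ 2) * ha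
  have hY : L * ((c ^ 2 + a ^ 2) * (c ^ 2 - b ^ 2) * (c ^ 2 + u ^ 2)) = y * N := by
    linear_combination (c ^ 2 + a ^ 2) * (c ^ 2 + u ^ 2) * hb
  have hZ : L * ((c ^ 2 + a ^ 2) * (c ^ 2 + b ^ 2) * (c ^ 2 - u ^ 2)) = z * N := by
    linear_combination (c ^ 2 + a ^ 2) * (c ^ 2 + b ^ 2) * hu
  have : L ^ 2 * cuboidPoly a b c u = 0 := by
    rw [cuboidPoly_eq_sq_add_sq_sub_sq]
    linear_combination (L * ((c ^ 2 - a ^ 2) * (c ^ 2 + b ^ 2) * (c ^ 2 + u ^ 2)) + x * N) * hX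
      + (L * ((c ^ 2 + a ^ 2) * (c ^ 2 - b ^ 2) * (c ^ 2 + u ^ 2)) + y * N) * hY
      - (L * ((c ^ 2 + a ^ 2) * (c ^ 2 + b ^ 2) * (c ^ 2 - u ^ 2)) + z * N) * hZ + N ^ 2 * h
  exact (mul_eq_zero.1 this).resolve_left (pow_ne_zero 2 hL)

end

theorem add_mul_add_gt_of_cuboidPoly_eq_zero {R : Type*} [CommRing R] [LinearOrder R]
    [IsStrictOrderedRing R] {a b c u : R} (ha : 0 < a) (hb : 0 < b) (hac : a < c) (hbc : b < c)
    (hu : u ≠ 0) (h : cuboidPoly a b c u = 0) : (a + c) * (b + c) > 2 * c ^ 2 := by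
  have hc : 0 < c := ha.trans hac
  have hQ : 0 < 2 * c ^ 2 * (3 * c ^ 8 + 2 * (a ^ 2 + b ^ 2) * c ^ 6
      + (3 * (a ^ 2 - b ^ 2) ^ 2 + 2 * a ^ 2 * b ^ 2) * c ^ 4
      + 2 * a ^ 2 * b ^ 2 * (a ^ 2 + b ^ 2) * c ^ 2 + 3 * a ^ 4 * b ^ 4) * u ^ 2 := by
    positivity
  have h₂ : 0 < c ^ 2 - a * b + (a + b) * c := by nlinarith [mul_lt_mul'' hac hbc ha.le hb.le]
  have h₃ : 0 < (c ^ 2 + a * b) ^ 2 - ((a - b) * c) ^ 2 := by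
    have : 0 < c ^ 2 + a * b - (a - b) * c := by nlinarith
    have : 0 < c ^ 2 + a * b + (a - b) * c := by nlinarith
    nlinarith
  have hF : ((c ^ 2 - a * b) ^ 2 - ((a + b) * c) ^ 2) * ((c ^ 2 + a * b) ^ 2 - ((a - b) * c) ^ 2)
      * (u ^ 4 + c ^ 4) < 0 := by
    rw [cuboidPoly_eq_quadratic_in_sq] at h
    linarith
  have h₁ : (c ^ 2 - a * b) ^ 2 - ((a + b) * c) ^ 2 < 0 :=
    neg_of_mul_neg_left (neg_of_mul_neg_left hF (by positivity)) h₃.le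
  nlinarith

theorem exists_cuboidPoly_eq_zero_of_perfectCuboid (hcub : PerfectCuboid) :
    ∃ a b c u : ℤ, 0 < a ∧ 0 < b ∧ 0 < u ∧ a < c ∧ b < c ∧ u < c ∧ cuboidPoly a b c u = 0 := by
  obtain ⟨x₁, x₂, x₃, d₁, d₂, d₃, L, hx₁, hx₂, hx₃, hd₁, hd₂, hd₃, hL, h₁, h₂, h₃, h₄⟩ := hcub
  have e₃ : x₃ ^ 2 + d₃ ^ 2 = L ^ 2 := by linear_combination h₄ - h₃
  have e₁ : x₁ ^ 2 + d₁ ^ 2 = L ^ 2 := by linear_combination h₄ - h₁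
  have e₂ : d₂ ^ 2 + x₂ ^ 2 = L ^ 2 := by linear_combination h₄ - h₂
  have leg_lt {x d : ℤ} (hx : 0 < x) (h : x ^ 2 + d ^ 2 = L ^ 2) : d < x + L := by
    nlinarith
  set s := x₃ + L
  set t := x₁ + L
  set r := d₂ + L
  have hs : 0 < s := by positivity
  have ht : 0 < t := by positivity
  have hr : 0 < r := by positivity
  refine ⟨d₃ * (t * r), d₁ * (s * r), s * (t * r), x₂ * (s * t), by positivity, by positivity,
    by positivity, ?_, ?_, ?_, ?_⟩
  · exact mul_lt_mul_of_pos_right (leg_lt hx₃ e₃) (by positivity)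
  · rw [show s * (t * r) = t * (s * r) by ring]
    exact mul_lt_mul_of_pos_right (leg_lt hx₁ e₁) (by positivity)
  · rw [show s * (t * r) = r * (s * t) by ring]
    exact mul_lt_mul_of_pos_right (leg_lt hd₂ e₂) (by positivity)
  · exact cuboidPoly_eq_zero_of_half_angle hL.ne' (half_angle_relation e₃ rfl)
      (half_angle_relation e₁ (by ring)) (half_angle_relation e₂ (by ring)) h₂

theorem perfectCuboid_of_cuboidPoly_eq_zero {a b c u : ℤ} (ha : 0 < a) (hb : 0 < b) (hu : 0 < u)
    (hac : a < c) (hbc : b < c) (huc : u < c) (h : cuboidPoly a b c u = 0) : PerfectCuboid := by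
  have hA : 0 < c ^ 2 - a ^ 2 := sub_pos.2 (pow_lt_pow_left₀ hac ha.le two_ne_zero)
  have hB : 0 < c ^ 2 - b ^ 2 := sub_pos.2 (pow_lt_pow_left₀ hbc hb.le two_ne_zero)
  have hU : 0 < c ^ 2 - u ^ 2 := sub_pos.2 (pow_lt_pow_left₀ huc hu.le two_ne_zero)
  have hc : 0 < c := ha.trans hac
  rw [cuboidPoly_eq_sq_add_sq_sub_sq] at h
  refine ⟨(c ^ 2 + a ^ 2) * (c ^ 2 - b ^ 2) * (c ^ 2 + u ^ 2),
    2 * u * c * ((c ^ 2 + a ^ 2) * (c ^ 2 + b ^ 2)),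
    (c ^ 2 - a ^ 2) * (c ^ 2 + b ^ 2) * (c ^ 2 + u ^ 2),
    2 * b * c * ((c ^ 2 + a ^ 2) * (c ^ 2 + u ^ 2)),
    (c ^ 2 + a ^ 2) * (c ^ 2 + b ^ 2) * (c ^ 2 - u ^ 2),
    2 * a * c * ((c ^ 2 + b ^ 2) * (c ^ 2 + u ^ 2)),
    (c ^ 2 + a ^ 2) * (c ^ 2 + b ^ 2) * (c ^ 2 + u ^ 2),
    by positivity, by positivity, by positivity, by positivity, by positivity, by positivity,
    by positivity, ?_, ?_, ?_, ?_⟩ <;> linear_combination h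

theorem perfect_cuboid_iff_diophantine :
    PerfectCuboid ↔
      ∃ a b c u : ℤ, 0 < a ∧ 0 < b ∧ 0 < c ∧ 0 < u ∧
        a < c ∧ b < c ∧ u < c ∧ (a + c) * (b + c) > 2 * c ^ 2 ∧
        u ^ 4 * a ^ 4 * b ^ 4 + 6 * a ^ 4 * u ^ 2 * b ^ 4 * c ^ 2
          - 2 * u ^ 4 * a ^ 4 * b ^ 2 * c ^ 2 - 2 * u ^ 4 * a ^ 2 * b ^ 4 * c ^ 2
          + 4 * u ^ 2 * b ^ 4 * a ^ 2 * c ^ 4 + 4 * a ^ 4 * u ^ 2 * b ^ 2 * c ^ 4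
          - 12 * u ^ 4 * a ^ 2 * b ^ 2 * c ^ 4
          + u ^ 4 * a ^ 4 * c ^ 4 + u ^ 4 * b ^ 4 * c ^ 4 + a ^ 4 * b ^ 4 * c ^ 4
          + 6 * a ^ 4 * u ^ 2 * c ^ 6 + 6 * u ^ 2 * b ^ 4 * c ^ 6
          - 8 * a ^ 2 * b ^ 2 * u ^ 2 * c ^ 6
          - 2 * u ^ 4 * a ^ 2 * c ^ 6 - 2 * u ^ 4 * b ^ 2 * c ^ 6
          - 2 * a ^ 4 * b ^ 2 * c ^ 6 - 2 * b ^ 4 * a ^ 2 * c ^ 6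
          + u ^ 4 * c ^ 8 + b ^ 4 * c ^ 8 + a ^ 4 * c ^ 8
          + 4 * a ^ 2 * u ^ 2 * c ^ 8 + 4 * b ^ 2 * u ^ 2 * c ^ 8
          - 12 * a ^ 2 * b ^ 2 * c ^ 8
          + 6 * u ^ 2 * c ^ 10 - 2 * a ^ 2 * c ^ 10 - 2 * b ^ 2 * c ^ 10
          + c ^ 12 = 0 := by
  constructor
  · intro hcub
    obtain ⟨a, b, c, u, ha, hb, hu, hac, hbc, huc, h⟩ :=
      exists_cuboidPoly_eq_zero_of_perfectCuboid hcub
    exact ⟨a, b, c, u, ha, hb, ha.trans hac, hu, hac, hbc, huc,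
      add_mul_add_gt_of_cuboidPoly_eq_zero ha hb hac hbc hu.ne' h, h⟩
  · rintro ⟨a, b, c, u, ha, hb, -, hu, hac, hbc, huc, -, h⟩
    exact perfectCuboid_of_cuboidPoly_eq_zero ha hb hu hac hbc huc h
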